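/- Fix real x with |x| < 1 and s > 0. For λ = √N·x and t = N·s, the rescaled joint density satisfies lim_{N→∞} N·P_N(N s, √N x) = (1/(2√(2π))) · e^{-(1−x²)/(2s)} · (1−x²)/s², where P_N(t, λ) = (1/(2√(2π))) e^{λ²/(2(1+t))} (1/(t(1+t))) (t/(1+t))^{(N−1)/2} (1/(N−2)!) [Γ(N, λ²) − λ²(t/(1+t))Γ(N−1, λ²)]. -/

import Mathlib

/-!
With `t = N s` and `λ² = N x²`, every factor of `N · P_N` other than the incomplete Gamma values is
an elementary function of `ρ_N = N / (N + 1/s) → 1`; in particular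
`(t / (1 + t)) ^ ((N - 1) / 2) = ρ_N ^ ((N - 1) / 2) → e^{-1/(2s)}`.
The incomplete Gamma values are asymptotically complete: `Γ(n, b) / (n - 1)! → 1` as long as
`b ≤ c n` for some `c < 1`, since the Chernoff bound
`∫₀^b e^{-u} u^{n-1} du ≤ e^{(r-1) b} (n - 1)! / r^n` with `r = 1/c` gives the lower part at most
`(c e^{1-c})^n (n - 1)!`, and `c e^{1-c} < 1`.
-/

open MeasureTheory Real Filter

noncomputable def iGamma (N : ℕ) (a : ℝ) : ℝ := ∫ u in Set.Ioi a, Real.exp (-u) * u ^ (N - 1)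
noncomputable def Pr (N : ℕ) (t l : ℝ) : ℝ :=
  (1 / (2 * Real.sqrt (2 * π))) * Real.exp (l ^ 2 / (2 * (1 + t))) *
    (1 / (t * (1 + t))) * (t / (1 + t)) ^ (((N : ℝ) - 1) / 2) *
    (1 / Nat.factorial (N - 2)) *
    (iGamma N (l ^ 2) - l ^ 2 * (t / (1 + t)) * iGamma (N - 1) (l ^ 2))

open Set Nat Topology

lemma integrableOn_pow_mul_exp_neg_mul_Ioi (k : ℕ) {r : ℝ} (hr : 0 < r) :
    IntegrableOn (fun u : ℝ => u ^ k * exp (-(r * u))) (Ioi 0) :=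
  (integrableOn_rpow_mul_exp_neg_mul_rpow (s := k) (p := 1) (by linarith [k.cast_nonneg (α := ℝ)])
    one_pos hr).congr_fun (fun u _ => by simp [rpow_natCast]) measurableSet_Ioi

lemma integral_pow_mul_exp_neg_mul_Ioi (k : ℕ) {r : ℝ} (hr : 0 < r) :
    ∫ u in Ioi 0, u ^ k * exp (-(r * u)) = k ! / r ^ (k + 1) := by
  have h := integral_rpow_mul_exp_neg_mul_Ioi (a := k + 1) (by positivity) hr
  rw [add_sub_cancel_right, Gamma_nat_eq_factorial, ← Nat.cast_add_one, rpow_natCast,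
    one_div_pow] at h
  simpa [rpow_natCast, div_eq_inv_mul] using h

lemma iGamma_add_one (k : ℕ) {a : ℝ} (ha : 0 ≤ a) :
    iGamma (k + 1) a = (k ! : ℝ) - ∫ u in Ioc 0 a, exp (-u) * u ^ k := by
  have hint : IntegrableOn (fun u : ℝ => exp (-u) * u ^ k) (Ioi 0) :=
    (integrableOn_pow_mul_exp_neg_mul_Ioi k one_pos).congr_fun
      (fun u _ => by simp [mul_comm]) measurableSet_Ioi
  have htotal : ∫ u in Ioi 0, exp (-u) * u ^ k = k ! := by
    simpa [mul_comm] using integral_pow_mul_exp_neg_mul_Ioi k one_pos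
  rw [iGamma, Nat.add_sub_cancel, eq_sub_iff_add_eq, add_comm, ← htotal,
    ← setIntegral_union Ioc_disjoint_Ioi_same measurableSet_Ioi (hint.mono_set Ioc_subset_Ioi_self)
      (hint.mono_set (Ioi_subset_Ioi ha)), Ioc_union_Ioi_eq_Ioi ha]

lemma integral_Ioc_exp_neg_mul_pow_le (k : ℕ) (a : ℝ) {r : ℝ} (hr : 1 ≤ r) :
    ∫ u in Ioc 0 a, exp (-u) * u ^ k ≤ exp ((r - 1) * a) * (k ! / r ^ (k + 1)) := by
  have hint : IntegrableOn (fun u => exp ((r - 1) * a) * (u ^ k * exp (-(r * u)))) (Ioi 0) :=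
    (integrableOn_pow_mul_exp_neg_mul_Ioi k (by linarith)).const_mul _
  calc ∫ u in Ioc 0 a, exp (-u) * u ^ k
      ≤ ∫ u in Ioc 0 a, exp ((r - 1) * a) * (u ^ k * exp (-(r * u))) := by
        refine setIntegral_mono_on ?_ (hint.mono_set Ioc_subset_Ioi_self) measurableSet_Ioc
          fun u hu => ?_
        · exact (continuous_exp.comp continuous_neg |>.mul (continuous_pow k)).integrableOn_Icc
            |>.mono_set Ioc_subset_Icc_self
        · rw [mul_left_comm, ← exp_add, mul_comm]
          exact mul_le_mul_of_nonneg_left (exp_le_exp.2 (by nlinarith [hu.2]))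
            (pow_nonneg hu.1.le k)
    _ ≤ ∫ u in Ioi 0, exp ((r - 1) * a) * (u ^ k * exp (-(r * u))) :=
        setIntegral_mono_set hint
          (ae_restrict_of_forall_mem measurableSet_Ioi fun u hu =>
            mul_nonneg (exp_nonneg _) (mul_nonneg (pow_nonneg (le_of_lt hu) k) (exp_nonneg _)))
          Ioc_subset_Ioi_self.eventuallyLE
    _ = exp ((r - 1) * a) * (k ! / r ^ (k + 1)) := by
        rw [integral_const_mul, integral_pow_mul_exp_neg_mul_Ioi k (by linarith)]

lemma integral_Ioc_exp_neg_mul_pow_div_factorial_le (k : ℕ) {a c : ℝ} (hc0 : 0 < c) (hc1 : c ≤ 1)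
    (ha : a ≤ c * (k + 1)) :
    (∫ u in Ioc 0 a, exp (-u) * u ^ k) / k ! ≤ (c * exp (1 - c)) ^ (k + 1) := by
  have hr : 1 ≤ c⁻¹ := one_le_inv₀ hc0 |>.2 hc1
  rw [div_le_iff₀ (by positivity)]
  calc ∫ u in Ioc 0 a, exp (-u) * u ^ k
      ≤ exp ((c⁻¹ - 1) * a) * (k ! / c⁻¹ ^ (k + 1)) := integral_Ioc_exp_neg_mul_pow_le k a hr
    _ ≤ exp ((c⁻¹ - 1) * (c * (k + 1))) * (k ! / c⁻¹ ^ (k + 1)) := by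
        gcongr
    _ = (c * exp (1 - c)) ^ (k + 1) * k ! := by
        rw [mul_pow, ← exp_nat_mul, inv_pow, div_inv_eq_mul]
        field_simp
        congr 2
        push_cast
        ring

lemma tendsto_iGamma_div_factorial {c : ℝ} (hc0 : 0 < c) (hc1 : c < 1) {b : ℕ → ℝ}
    (hb : ∀ᶠ n in atTop, 0 ≤ b n ∧ b n ≤ c * n) :
    Tendsto (fun n => iGamma n (b n) / (n - 1)!) atTop (𝓝 1) := by
  set q := c * exp (1 - c)
  have hq : q < 1 := by
    calc q < exp (c - 1) * exp (1 - c) :=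
          mul_lt_mul_of_pos_right (by linarith [add_one_lt_exp (x := c - 1) (by linarith)])
            (exp_pos _)
      _ = 1 := by rw [← exp_add]; simp
  have hlower : Tendsto (fun n => 1 - q ^ n) atTop (𝓝 1) := by
    simpa using tendsto_const_nhds.sub
      (tendsto_pow_atTop_nhds_zero_of_lt_one (by positivity) hq)
  refine tendsto_of_tendsto_of_tendsto_of_le_of_le' hlower tendsto_const_nhds ?_ ?_
  all_goals filter_upwards [hb, eventually_ge_atTop 1] with n ⟨hb0, hbc⟩ hn
  all_goals obtain ⟨k, rfl⟩ := Nat.exists_eq_add_of_le' hn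
  all_goals rw [iGamma_add_one k hb0, Nat.add_sub_cancel, sub_div, div_self (by positivity)]
  · gcongr
    exact integral_Ioc_exp_neg_mul_pow_div_factorial_le k hc0 hc1.le (by exact_mod_cast hbc)
  · have hlower_nonneg : 0 ≤ ∫ u in Ioc 0 (b (k + 1)), exp (-u) * u ^ k :=
      setIntegral_nonneg measurableSet_Ioc fun u hu => by have := hu.1; positivity
    simp only [sub_le_self_iff]
    positivity

lemma tendsto_div_add_rpow_half_pred (a : ℝ) :
    Tendsto (fun N : ℕ => ((N : ℝ) / (N + a)) ^ (((N : ℝ) - 1) / 2)) atTop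
      (𝓝 (exp (-a / 2))) := by
  have hlog : Tendsto (fun N : ℕ => log (1 + a / N)) atTop (𝓝 0) := by
    have h := (tendsto_const_div_atTop_nhds_zero_nat a).const_add 1
    rw [add_zero] at h
    simpa [Function.comp_def] using (continuousAt_log one_ne_zero).tendsto.comp h
  have hmul : Tendsto (fun N : ℕ => (N : ℝ) * log (1 + a / N)) atTop (𝓝 a) :=
    (tendsto_mul_log_one_add_div_atTop a).comp tendsto_natCast_atTop_atTop
  have hexp := (continuous_exp.tendsto _).comp ((hmul.sub hlog).div_const (-2))
  rw [sub_zero, div_neg, ← neg_div] at hexp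
  refine hexp.congr' ?_
  filter_upwards [eventually_gt_atTop 0,
    tendsto_natCast_atTop_atTop.eventually_gt_atTop (-a)] with N hN0 hNa
  have hN : (0 : ℝ) < N := Nat.cast_pos.2 hN0
  have hlog_div : log (N / (N + a)) = -log (1 + a / N) := by
    rw [← log_inv, one_add_div hN.ne', inv_div]
  rw [Function.comp_apply, rpow_def_of_pos (div_pos hN (by linarith)), hlog_div]
  ring_nf

lemma tendsto_iGamma_sub_mul_iGamma_pred {x : ℝ} (hx : x ^ 2 < 1) {ρ : ℕ → ℝ}
    (hρ : Tendsto ρ atTop (𝓝 1)) :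
    Tendsto (fun N : ℕ => (iGamma N (N * x ^ 2) - N * x ^ 2 * ρ N * iGamma (N - 1) (N * x ^ 2))
      / (N * (N - 2)!)) atTop (𝓝 (1 - x ^ 2)) := by
  set c := (1 + x ^ 2) / 2 with hc
  have hc0 : 0 < c := by positivity
  have hc1 : c < 1 := by rw [hc]; linarith
  have hΓ : Tendsto (fun N : ℕ => iGamma N (N * x ^ 2) / (N - 1)!) atTop (𝓝 1) :=
    tendsto_iGamma_div_factorial hc0 hc1 <| .of_forall fun N =>
      ⟨by positivity, by rw [mul_comm c]; gcongr; rw [hc]; linarith⟩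
  have hΓpred : Tendsto (fun N : ℕ => iGamma (N - 1) (N * x ^ 2) / (N - 2)!) atTop (𝓝 1) := by
    have hlarge : ∀ᶠ m : ℕ in atTop, 0 ≤ ((m : ℝ) + 1) * x ^ 2 ∧ ((m : ℝ) + 1) * x ^ 2 ≤ c * m := by
      filter_upwards [tendsto_natCast_atTop_atTop.eventually_ge_atTop (2 / (1 - x ^ 2))] with m hm
      rw [div_le_iff₀ (by linarith)] at hm
      exact ⟨by positivity, by rw [hc]; nlinarith⟩
    refine ((tendsto_iGamma_div_factorial hc0 hc1 hlarge).comp (tendsto_sub_atTop_nat 1)).congr' ?_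
    filter_upwards [eventually_ge_atTop 1] with N hN
    simp [Nat.cast_sub hN, Nat.sub_sub]
  have hfrac : Tendsto (fun N : ℕ => 1 - 1 / (N : ℝ)) atTop (𝓝 1) := by
    simpa using tendsto_const_nhds.sub (tendsto_const_div_atTop_nhds_zero_nat (1 : ℝ))
  have h := (hfrac.mul hΓ).sub ((hρ.const_mul (x ^ 2)).mul hΓpred)
  rw [mul_one, mul_one, mul_one] at h
  refine h.congr' ?_
  filter_upwards [eventually_ge_atTop 2] with N hN
  obtain ⟨m, rfl⟩ := Nat.exists_eq_add_of_le' hN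
  simp only [Nat.add_sub_cancel, show m + 2 - 1 = m + 1 by omega, Nat.factorial_succ]
  push_cast
  field_simp
  ring

theorem stmt7 (x s : ℝ) (hx : |x| < 1) (hs : 0 < s) :
    Tendsto (fun N : ℕ => (N : ℝ) * Pr N ((N : ℝ) * s) (Real.sqrt N * x)) atTop
      (nhds ((1 / (2 * Real.sqrt (2 * π))) * Real.exp (-(1 - x ^ 2) / (2 * s)) *
        (1 - x ^ 2) / s ^ 2)) := by
  have hx2 : x ^ 2 < 1 := by simpa using pow_lt_one₀ (abs_nonneg x) hx two_ne_zero
  have hρ : Tendsto (fun N : ℕ => (N : ℝ) / (N + s⁻¹)) atTop (𝓝 1) :=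
    tendsto_natCast_div_add_atTop s⁻¹
  have h := ((((tendsto_const_nhds (x := 1 / (2 * √(2 * π)))).mul
      ((continuous_exp.tendsto _).comp (hρ.const_mul (x ^ 2 / (2 * s))))).mul
      (tendsto_div_add_rpow_half_pred s⁻¹)).mul (hρ.div_const (s ^ 2))).mul
      (tendsto_iGamma_sub_mul_iGamma_pred hx2 hρ)
  have hexp : exp (-(1 - x ^ 2) / (2 * s)) = exp (x ^ 2 / (2 * s) * 1) * exp (-s⁻¹ / 2) := by
    rw [← exp_add]; congr 1; field_simp; ring
  rw [hexp]
  convert h.congr' ?_ using 2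
  · ring
  filter_upwards [eventually_gt_atTop 0] with N hN0
  have hN : (0 : ℝ) < N := Nat.cast_pos.2 hN0
  have hsq : (√N * x) ^ 2 = N * x ^ 2 := by rw [mul_pow, sq_sqrt hN.le]
  have hratio : N * s / (1 + N * s) = N / (N + s⁻¹) := by field_simp; ring
  have harg : N * x ^ 2 / (2 * (1 + N * s)) = x ^ 2 / (2 * s) * (N / (N + s⁻¹)) := by
    rw [← hratio]; field_simp
  rw [Function.comp_apply, Pr, hsq, hratio, harg]
  -- keep `field_simp` out of the rpow base, which is the same on both sides
  generalize ((N : ℝ) / (N + s⁻¹)) ^ (((N : ℝ) - 1) / 2) = B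
  field_simp
  ring
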